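/- Let M be a matroid on a finite ground set E whose ground set can be partitioned into k independent sets. Then for every list assignment L on E with |L(e)| = 2k for all e ∈ E, one can choose for each e ∈ E a subset L'(e) ⊆ L(e) with |L'(e)| = 2 such that for every color i ∈ ℕ, the set {e ∈ E : i ∈ L'(e)} is independent in M. -/

import Mathlib

/-!
Rado's theorem: if a finite family of finite sets `A i` in a matroid `N` satisfies
`|S| ≤ r_N (⋃ i ∈ S, A i)` for every finite `S`, it has an independent transversal. The proof
shrinks the sets one element at a time; by submodularity of `r_N`, of any two elements of an
`A i` one can be removed without violating the condition.

Apply this in the direct sum `N = ⊕_c M` over the colours, to the family consisting of `m` copies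
of the row `L e × {e}` for each `e ∈ E`. A transversal picks `m` distinct colours for each `e`, and
its independence in `N` says exactly that every colour class is independent in `M`. The condition
holds since, for `T ⊆ E` and `T_c = {e ∈ T | c ∈ L e}`, covering by `k` independent sets gives
`|T_c| ≤ k r_M(T_c)`, while `∑_c |T_c| ≥ m k |T|` and `∑_c r_M(T_c) ≤ r_N (⋃ e ∈ T, L e × {e})`.
-/

open Set Function

lemma Set.biUnion_update_of_notMem {ι β : Type*} [DecidableEq ι] {S : Finset ι} {i₀ : ι}
    (hi₀ : i₀ ∉ S) (A : ι → Set β) (B : Set β) :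
    ⋃ i ∈ S, update A i₀ B i = ⋃ i ∈ S, A i :=
  iUnion₂_congr fun _ hi ↦ update_of_ne (ne_of_mem_of_not_mem hi hi₀) _ _

namespace Matroid

variable {α β ι κ : Type*}

lemma encard_le_card_mul_eRk_of_subset_iUnion [Fintype ι] {M : Matroid α} {I : ι → Set α}
    (hI : ∀ i, M.Indep (I i)) {X : Set α} (hX : X ⊆ ⋃ i, I i) :
    X.encard ≤ Fintype.card ι * M.eRk X :=
  calc X.encard = (⋃ i, X ∩ I i).encard := by rw [← inter_iUnion, inter_eq_left.2 hX]
    _ ≤ ∑ i, (X ∩ I i).encard := encard_iUnion_le_of_fintype _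
    _ ≤ ∑ _i : ι, M.eRk X := Finset.sum_le_sum fun i _ ↦
      ((hI i).subset inter_subset_right).encard_le_eRk_of_subset inter_subset_left
    _ = Fintype.card ι * M.eRk X := by simp

lemma sum_eRk_preimage_le_eRk_sum' (M : ι → Matroid α) (C : Finset ι) (X : Set (ι × α)) :
    ∑ c ∈ C, (M c).eRk (Prod.mk c ⁻¹' X) ≤ (Matroid.sum' M).eRk X := by
  choose B hB using fun c ↦ (M c).exists_isBasis' (Prod.mk c ⁻¹' X)
  set J := ⋃ c ∈ C, Prod.mk c '' B c
  have hJ : (Matroid.sum' M).Indep J := by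
    refine sum'_indep_iff.2 fun c ↦ (hB c).indep.subset ?_
    intro a ha
    simp only [J, mem_preimage, mem_iUnion, mem_image, Prod.mk.injEq] at ha
    obtain ⟨_, -, a, ha, rfl, rfl⟩ := ha
    exact ha
  have hJX : J ⊆ X := iUnion₂_subset fun c _ ↦ image_subset_iff.2 (hB c).subset
  have hdisj : (C : Set ι).PairwiseDisjoint fun c ↦ Prod.mk c '' B c := by
    intro c _ c' _ hcc'
    simp only [onFun, disjoint_left, mem_image]
    rintro _ ⟨a, -, rfl⟩ ⟨a', -, h⟩
    exact hcc' (Prod.mk.inj h).1.symm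
  calc ∑ c ∈ C, (M c).eRk (Prod.mk c ⁻¹' X) = ∑ c ∈ C, (Prod.mk c '' B c).encard := by
        refine Finset.sum_congr rfl fun c _ ↦ ?_
        rw [(Prod.mk_right_injective c).encard_image, (hB c).encard_eq_eRk]
    _ = J.encard := by
        simp only [J]
        rw [← Finset.set_biUnion_coe, C.finite_toSet.encard_biUnion hdisj, finsum_mem_coe_finset]
    _ ≤ (Matroid.sum' M).eRk X := hJ.encard_le_eRk_of_subset hJX

def RadoCondition (N : Matroid β) (A : ι → Set β) : Prop :=
  ∀ S : Finset ι, (S.card : ℕ∞) ≤ N.eRk (⋃ i ∈ S, A i)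

variable {N : Matroid β} {A : ι → Set β}

lemma RadoCondition.exists_injective_indep_range_of_subsingleton [Fintype ι]
    (h : N.RadoCondition A) (hA : ∀ i, (A i).Subsingleton) :
    ∃ f : ι → β, Injective f ∧ (∀ i, f i ∈ A i) ∧ N.Indep (range f) := by
  classical
  have hne : ∀ i, (A i).Nonempty := fun i ↦ by
    rw [nonempty_iff_ne_empty]
    intro hi
    simpa [hi] using h {i}
  choose f hf using hne
  have hrange : range f = ↑(Finset.univ.image f) := by simp
  have hunion : ⋃ i, A i = range f := by
    ext b
    simp [(hA _).eq_singleton_of_mem (hf _), eq_comm]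
  have hle : (Fintype.card ι : ℕ∞) ≤ N.eRk (range f) := by
    simpa [hunion] using h Finset.univ
  have hcard : N.eRk (range f) ≤ (Finset.univ.image f).card := by
    rw [hrange, ← encard_coe_eq_coe_finsetCard]
    exact N.eRk_le_encard _
  have himage : (Finset.univ.image f).card = Fintype.card ι := by
    have := hle.trans hcard
    norm_cast at this
    exact le_antisymm Finset.card_image_le this
  refine ⟨f, fun a b hab ↦ Finset.card_image_iff.1 himage (by simp) (by simp) hab, hf, ?_⟩
  rw [indep_iff_eRk_eq_encard_of_finite (finite_range f), hrange, encard_coe_eq_coe_finsetCard]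
  exact le_antisymm (hrange ▸ hcard) (himage ▸ hrange ▸ hle)

lemma RadoCondition.exists_eRk_le_of_not_update [DecidableEq ι] (h : N.RadoCondition A)
    {i₀ : ι} {B : Set β} (h' : ¬ N.RadoCondition (update A i₀ B)) :
    ∃ T : Finset ι, i₀ ∉ T ∧ N.eRk (B ∪ ⋃ i ∈ T, A i) ≤ T.card := by
  simp only [RadoCondition, not_forall, not_le] at h'
  obtain ⟨S, hS⟩ := h'
  have hi₀ : i₀ ∈ S := by
    by_contra hi₀
    rw [Set.biUnion_update_of_notMem hi₀] at hS
    exact (h S).not_gt hS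
  have hi₀' : i₀ ∉ S.erase i₀ := Finset.notMem_erase _ _
  refine ⟨S.erase i₀, hi₀', ?_⟩
  rw [← Finset.insert_erase hi₀, Finset.set_biUnion_insert, update_self,
    Set.biUnion_update_of_notMem hi₀', Finset.card_insert_of_notMem hi₀'] at hS
  exact (ENat.lt_add_one_iff (ENat.natCast_ne_top _)).1 (by exact_mod_cast hS)

lemma RadoCondition.exists_update_sdiff_singleton [DecidableEq ι] (h : N.RadoCondition A)
    {i₀ : ι} {x y : β} (hx : x ∈ A i₀) (hy : y ∈ A i₀) (hxy : x ≠ y) :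
    ∃ z ∈ A i₀, N.RadoCondition (update A i₀ (A i₀ \ {z})) := by
  by_contra! hfail
  obtain ⟨Tx, hx₀, hTx⟩ := h.exists_eRk_le_of_not_update (hfail x hx)
  obtain ⟨Ty, hy₀, hTy⟩ := h.exists_eRk_le_of_not_update (hfail y hy)
  set X := (A i₀ \ {x}) ∪ ⋃ i ∈ Tx, A i
  set Y := (A i₀ \ {y}) ∪ ⋃ i ∈ Ty, A i
  have hunion : ⋃ i ∈ insert i₀ (Tx ∪ Ty), A i = X ∪ Y := by
    ext b
    simp only [X, Y, Finset.set_biUnion_insert, Finset.set_biUnion_union, mem_union, mem_sdiff,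
      mem_singleton_iff]
    have : ¬(b = x ∧ b = y) := fun ⟨hbx, hby⟩ ↦ hxy (hbx ▸ hby)
    tauto
  have hinter : ⋃ i ∈ Tx ∩ Ty, A i ⊆ X ∩ Y :=
    iUnion₂_subset fun i hi ↦ subset_inter
      (subset_union_of_subset_right (subset_biUnion_of_mem (Finset.mem_inter.1 hi).1) _)
      (subset_union_of_subset_right (subset_biUnion_of_mem (Finset.mem_inter.1 hi).2) _)
  have hcard : (insert i₀ (Tx ∪ Ty)).card + (Tx ∩ Ty).card = Tx.card + Ty.card + 1 := by
    rw [Finset.card_insert_of_notMem (by simp [hx₀, hy₀]), add_right_comm,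
      Finset.card_union_add_card_inter]
  have : ((Tx.card + Ty.card + 1 : ℕ) : ℕ∞) ≤ (Tx.card + Ty.card : ℕ) :=
    calc ((Tx.card + Ty.card + 1 : ℕ) : ℕ∞)
        = (insert i₀ (Tx ∪ Ty)).card + (Tx ∩ Ty).card := by rw [← hcard]; push_cast; rfl
      _ ≤ N.eRk (X ∪ Y) + N.eRk (X ∩ Y) :=
        add_le_add (hunion ▸ h _) ((h _).trans (N.eRk_mono hinter))
      _ ≤ N.eRk X + N.eRk Y := by rw [add_comm]; exact N.eRk_inter_add_eRk_union_le X Y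
      _ ≤ (Tx.card + Ty.card : ℕ) := by push_cast; exact add_le_add hTx hTy
  norm_cast at this
  omega

theorem RadoCondition.exists_injective_indep_range [Fintype ι] (h : N.RadoCondition A)
    (hA : ∀ i, (A i).Finite) :
    ∃ f : ι → β, Injective f ∧ (∀ i, f i ∈ A i) ∧ N.Indep (range f) := by
  classical
  induction hn : ∑ i, (A i).ncard using Nat.strong_induction_on generalizing A with
  | _ n ih =>
  by_cases hsub : ∀ i, (A i).Subsingleton
  · exact h.exists_injective_indep_range_of_subsingleton hsub
  push Not at hsub
  obtain ⟨i₀, x, hx, y, hy, hxy⟩ := hsub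
  obtain ⟨z, hz, hz'⟩ := h.exists_update_sdiff_singleton hx hy hxy
  have hle : update A i₀ (A i₀ \ {z}) ≤ A := update_le_iff.2 ⟨sdiff_subset, fun _ _ ↦ le_rfl⟩
  have hlt : ∑ i, (update A i₀ (A i₀ \ {z}) i).ncard < n := hn ▸
    Finset.sum_lt_sum (fun i _ ↦ ncard_le_ncard (hle i) (hA i))
      ⟨i₀, Finset.mem_univ _, by simpa using ncard_sdiff_singleton_lt_of_mem hz (hA i₀)⟩
  obtain ⟨f, hinj, hf, hind⟩ := ih _ hlt hz' (fun i ↦ (hA i).subset (hle i)) rfl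
  exact ⟨f, hinj, fun i ↦ hle i (hf i), hind⟩

lemma mul_card_le_eRk_sum'_biUnion [Fintype ι] [DecidableEq κ] {M : Matroid α} {I : ι → Set α}
    (hI : ∀ i, M.Indep (I i)) {T : Finset α} (hT : ↑T ⊆ ⋃ i, I i) {L : α → Finset κ} {m : ℕ}
    (hL : ∀ e ∈ T, m * Fintype.card ι ≤ (L e).card) :
    (m * T.card : ℕ∞) ≤ (Matroid.sum' fun _ : κ ↦ M).eRk (⋃ e ∈ T, (L e : Set κ) ×ˢ {e}) := by
  classical
  set W := ⋃ e ∈ T, (L e : Set κ) ×ˢ {e}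
  set C := T.biUnion L
  set k := Fintype.card ι
  have hpre : ∀ c, Prod.mk c ⁻¹' W = ↑(T.filter (c ∈ L ·)) := fun c ↦ by
    ext e
    simp [W, and_comm]
  have hcount : m * k * T.card ≤ ∑ c ∈ C, (T.filter (c ∈ L ·)).card :=
    calc m * k * T.card = ∑ _e ∈ T, m * k := by simp [mul_comm]
      _ ≤ ∑ e ∈ T, (L e).card := Finset.sum_le_sum hL
      _ = ∑ e ∈ T, (C.filter (· ∈ L e)).card := Finset.sum_congr rfl fun e he ↦ by
        rw [Finset.filter_mem_eq_inter, Finset.inter_eq_right.2 (Finset.subset_biUnion_of_mem L he)]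
      _ = ∑ c ∈ C, (T.filter (c ∈ L ·)).card :=
        Finset.sum_card_bipartiteAbove_eq_sum_card_bipartiteBelow _
  have hk : (k : ℕ∞) * (m * T.card) ≤ k * (Matroid.sum' fun _ : κ ↦ M).eRk W :=
    calc (k : ℕ∞) * (m * T.card) = ((m * k * T.card : ℕ) : ℕ∞) := by push_cast; ring
      _ ≤ ∑ c ∈ C, ((T.filter (c ∈ L ·)).card : ℕ∞) := by exact_mod_cast hcount
      _ ≤ ∑ c ∈ C, k * M.eRk (Prod.mk c ⁻¹' W) := Finset.sum_le_sum fun c _ ↦ by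
        rw [hpre, ← encard_coe_eq_coe_finsetCard]
        exact encard_le_card_mul_eRk_of_subset_iUnion hI
          ((Finset.coe_subset.2 (Finset.filter_subset _ _)).trans hT)
      _ = k * ∑ c ∈ C, M.eRk (Prod.mk c ⁻¹' W) := (Finset.mul_sum _ _ _).symm
      _ ≤ k * (Matroid.sum' fun _ : κ ↦ M).eRk W := by
        gcongr
        exact sum_eRk_preimage_le_eRk_sum' _ C W
  obtain rfl | ⟨e, he⟩ := T.eq_empty_or_nonempty
  · simp
  have hk0 : k ≠ 0 := by
    obtain ⟨i, -⟩ := mem_iUnion.1 (hT he)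
    exact (Fintype.card_pos_iff.2 ⟨i⟩).ne'
  exact (ENat.mul_le_mul_left_iff (by exact_mod_cast hk0) (ENat.natCast_ne_top k)).1 hk

lemma radoCondition_sum'_prod_singleton [Fintype ι] [DecidableEq κ] {M : Matroid α}
    {I : ι → Set α} (hI : ∀ i, M.Indep (I i)) (hcover : M.E ⊆ ⋃ i, I i) {m : ℕ}
    {L : α → Finset κ} (hL : ∀ e ∈ M.E, m * Fintype.card ι ≤ (L e).card) :
    (Matroid.sum' fun _ : κ ↦ M).RadoCondition
      fun p : M.E × Fin m ↦ (L p.1 : Set κ) ×ˢ {p.1.1} := by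
  classical
  intro S
  set T := S.image fun p ↦ p.1.1
  have hST : S.card ≤ m * T.card := by
    refine Finset.card_le_mul_card_image S m fun e _ ↦ ?_
    calc _ ≤ (Finset.univ : Finset (Fin m)).card :=
          Finset.card_le_card_of_injOn Prod.snd (by simp) fun p hp q hq h ↦ Prod.ext
            (Subtype.ext ((Finset.mem_filter.1 hp).2.trans (Finset.mem_filter.1 hq).2.symm)) h
      _ = m := by simp
  have hT : (T : Set α) ⊆ M.E := by
    intro e he
    obtain ⟨p, -, rfl⟩ := Finset.mem_image.1 he
    exact p.1.2
  have hW : ⋃ e ∈ T, (L e : Set κ) ×ˢ {e} = ⋃ p ∈ S, (L p.1 : Set κ) ×ˢ {p.1.1} := by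
    simp only [T, Finset.set_biUnion_finset_image]
  calc (S.card : ℕ∞) ≤ (m * T.card : ℕ) := by exact_mod_cast hST
    _ ≤ _ := by
      push_cast
      exact mul_card_le_eRk_sum'_biUnion hI (hT.trans hcover) fun e he ↦ hL e (hT he)
    _ = _ := by rw [hW]

theorem exists_sublists_indep_of_subset_iUnion_indep [Fintype ι] [DecidableEq κ] {M : Matroid α}
    (hE : M.E.Finite) {I : ι → Set α} (hI : ∀ i, M.Indep (I i)) (hcover : M.E ⊆ ⋃ i, I i)
    (m : ℕ) (L : α → Finset κ) (hL : ∀ e ∈ M.E, m * Fintype.card ι ≤ (L e).card) :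
    ∃ L' : α → Finset κ, (∀ e ∈ M.E, L' e ⊆ L e ∧ (L' e).card = m) ∧
      ∀ c, M.Indep {e ∈ M.E | c ∈ L' e} := by
  classical
  have := hE.fintype
  obtain ⟨f, hinj, hfA, hind⟩ :=
    (radoCondition_sum'_prod_singleton hI hcover hL).exists_injective_indep_range
      fun p ↦ (L _).finite_toSet.prod (finite_singleton _)
  have hf : ∀ p, f p = ((f p).1, p.1.1) ∧ (f p).1 ∈ L p.1 := fun p ↦ by
    obtain ⟨h1, h2⟩ := mem_prod.1 (hfA p)
    exact ⟨Prod.ext rfl h2, h1⟩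
  refine ⟨fun e ↦ if he : e ∈ M.E then Finset.univ.image fun j ↦ (f (⟨e, he⟩, j)).1 else ∅,
    fun e he ↦ ?_, fun c ↦ ?_⟩
  · simp only [dif_pos he]
    refine ⟨Finset.image_subset_iff.2 fun j _ ↦ (hf _).2, ?_⟩
    rw [Finset.card_image_of_injective _ fun j j' h ↦ ?_, Finset.card_univ, Fintype.card_fin]
    have := hinj ((hf _).1.trans (h ▸ (hf _).1.symm))
    exact (Prod.mk.inj this).2.symm
  · refine (sum'_indep_iff.1 hind c).subset ?_
    rintro e ⟨he, hc⟩
    simp only [dif_pos he, Finset.mem_image] at hc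
    obtain ⟨j, -, rfl⟩ := hc
    exact ⟨(⟨e, he⟩, j), (hf _).1⟩

end Matroid

theorem two_colors_from_lists_of_partition_general {α : Type*} (M : Matroid α) (hE : M.E.Finite)
    (k : ℕ) (I : Fin k → Set α) (hIndep : ∀ i, M.Indep (I i))
    (hunion : ⋃ i, I i = M.E)
    (L : α → Finset ℕ) (hL : ∀ e ∈ M.E, (L e).card = 2 * k) :
    ∃ L' : α → Finset ℕ, (∀ e ∈ M.E, L' e ⊆ L e ∧ (L' e).card = 2) ∧
      ∀ i : ℕ, M.Indep {e ∈ M.E | i ∈ L' e} :=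
  Matroid.exists_sublists_indep_of_subset_iUnion_indep hE hIndep hunion.symm.subset 2 L
    fun e he ↦ by rw [hL e he, Fintype.card_fin]

/-- If the ground set of a matroid `M` can be partitioned into `k` independent sets,
then from any lists of size `2k` one can choose `2` colors per element so that each
color class is independent in `M`. -/
theorem two_colors_from_lists_of_partition {α : Type*} (M : Matroid α) (hE : M.E.Finite)
    (k : ℕ) (I : Fin k → Set α) (hIndep : ∀ i, M.Indep (I i))
    (hdisj : Pairwise (Function.onFun Disjoint I)) (hunion : ⋃ i, I i = M.E)
    (L : α → Finset ℕ) (hL : ∀ e ∈ M.E, (L e).card = 2 * k) :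
    ∃ L' : α → Finset ℕ, (∀ e ∈ M.E, L' e ⊆ L e ∧ (L' e).card = 2) ∧
      ∀ i : ℕ, M.Indep {e ∈ M.E | i ∈ L' e} :=
  two_colors_from_lists_of_partition_general M hE k I hIndep hunion L hL
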